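/- arXiv:1807.00660 — 2 statements merged into one kernel-verified Lean document; each statement's English description precedes it below -/
import Mathlib

section
/- Let K be an algebraically closed field, A an associative unital K-algebra, and Z ⊆ A a subalgebra contained in the centre of A such that Z is a finitely generated commutative K-algebra and A is generated as a Z-module by n elements. Then every simple (irreducible) A-module is finite-dimensional over K, of dimension at most n. -/
/-!
A simple `A`-module `M = A • v` is finitely generated over the central subalgebra `Z`, so it has
a maximal `Z`-submodule, whose quotient is annihilated by a maximal ideal `𝔪` of `Z`. Since `Z` is
central, `𝔪 • M` is an `A`-submodule; it is proper, hence zero. By Zariski's lemma `Z ⧸ 𝔪 = K`,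
so every element of `Z` acts on `M` by a scalar, and the `n` vectors `aᵢ • v`, which span `M`
over `Z`, already span it over `K`.
-/

open Submodule

theorem Ideal.Quotient.algebraMap_surjective_of_isAlgClosed (K : Type*) [Field K] [IsAlgClosed K]
    {R : Type*} [CommRing R] [Algebra K R] [Algebra.FiniteType K R] (m : Ideal R) [m.IsMaximal] :
    Function.Surjective (algebraMap K (R ⧸ m)) :=
  letI := Ideal.Quotient.field m
  have : Algebra.FiniteType K (R ⧸ m) :=
    .of_surjective (Ideal.Quotient.mkₐ K m) (Ideal.Quotient.mkₐ_surjective K m)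
  have := finite_of_finite_type_of_isJacobsonRing K (R ⧸ m)
  IsAlgClosed.algebraMap_bijective_of_isIntegral.2

theorem Submodule.span_subset_span_of_forall_exists_smul_eq (K : Type*) {R M : Type*}
    [Semiring K] [Semiring R] [AddCommMonoid M] [Module K M] [Module R M]
    (h : ∀ r : R, ∃ c : K, ∀ v : M, r • v = c • v) (s : Set M) :
    (span R s : Set M) ⊆ span K s := by
  let P : Submodule R M :=
    { (span K s).toAddSubmonoid with
      smul_mem' := fun r v hv => by
        obtain ⟨c, hc⟩ := h r
        rw [hc]
        exact (span K s).smul_mem c hv }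
  exact span_le (p := P).2 subset_span

section CentralAction

variable {R A M : Type*} [CommRing R] [Ring A] [AddCommGroup M] [Module R M] [Module A M]

theorem Submodule.span_range_smul_eq_top [Module R A] [IsScalarTower R A M] {ι : Type*}
    {a : ι → A} (ha : span R (Set.range a) = ⊤) {v : M} (hv : span A {v} = ⊤) :
    span R (Set.range fun i => a i • v) = ⊤ := by
  let f : A →ₗ[R] M := (LinearMap.toSpanSingleton A M v).restrictScalars R
  have hf : Function.Surjective f :=
    LinearMap.range_eq_top (f := LinearMap.toSpanSingleton A M v) |>.1 <|
      (LinearMap.span_singleton_eq_range A M v).symm.trans hv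
  rw [show (Set.range fun i => a i • v) = f '' Set.range a from Set.range_comp f a,
    span_image, ha, map_top, LinearMap.range_eq_top.2 hf]

variable (A) in
theorem Submodule.ideal_smul_top_eq_bot_of_ne_top [SMulCommClass R A M] [IsSimpleModule A M]
    {I : Ideal R} (hI : I • (⊤ : Submodule R M) ≠ ⊤) : I • (⊤ : Submodule R M) = ⊥ := by
  let P : Submodule A M :=
    { (I • ⊤ : Submodule R M).toAddSubmonoid with
      smul_mem' := fun x v hv => by
        refine smul_induction_on hv (fun r hr w _ => ?_) (fun u w hu hw => ?_)
        · rw [← smul_comm r x w]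
          exact smul_mem_smul hr mem_top
        · rw [smul_add]
          exact (I • ⊤ : Submodule R M).add_mem hu hw }
  have hP : P = ⊥ := (eq_bot_or_eq_top P).resolve_right fun h =>
    hI (eq_top_iff.2 fun v _ => (h ▸ mem_top : v ∈ P))
  refine eq_bot_iff.2 fun v hv => (mem_bot R).2 ?_
  have hvP : v ∈ P := hv
  rwa [hP, mem_bot] at hvP

variable (A) in
theorem IsSimpleModule.exists_isMaximal_le_annihilator [SMulCommClass R A M] [IsSimpleModule A M]
    [Module.Finite R M] : ∃ m : Ideal R, m.IsMaximal ∧ m ≤ Module.annihilator R M := by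
  have : Nontrivial M := IsSimpleModule.nontrivial A M
  obtain ⟨N, hN, -⟩ := (eq_top_or_exists_le_coatom (⊥ : Submodule R M)).resolve_left bot_ne_top
  have : IsSimpleModule R (M ⧸ N) := isSimpleModule_iff_isCoatom.2 hN
  refine ⟨_, IsSimpleModule.annihilator_isMaximal (M := M ⧸ N), fun r hr => ?_⟩
  have hle : Module.annihilator R (M ⧸ N) • (⊤ : Submodule R M) ≤ N :=
    smul_le.2 fun s hs v _ => mem_colon.1 (annihilator_quotient (N := N) ▸ hs) v (Set.mem_univ v)
  have hbot := ideal_smul_top_eq_bot_of_ne_top A fun h => hN.1 (top_le_iff.1 (h ▸ hle))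
  exact Module.mem_annihilator.2 fun v => (mem_bot R).1 (hbot ▸ smul_mem_smul hr mem_top)

variable (A) in
theorem IsSimpleModule.exists_smul_eq_smul_of_isAlgClosed (K : Type*) [Field K] [IsAlgClosed K]
    [Algebra K R] [Algebra.FiniteType K R] [Module K M] [IsScalarTower K R M]
    [Module R A] [IsScalarTower R A M] [SMulCommClass R A M] [IsSimpleModule A M]
    [Module.Finite R A] (r : R) : ∃ c : K, ∀ v : M, r • v = c • v := by
  have : Module.Finite R M := .trans A M
  obtain ⟨m, hm, hann⟩ := exists_isMaximal_le_annihilator A (R := R) (M := M)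
  obtain ⟨c, hc⟩ :=
    Ideal.Quotient.algebraMap_surjective_of_isAlgClosed K m (Ideal.Quotient.mk m r)
  have hrc : r - algebraMap K R c ∈ m := by
    rw [← Ideal.Quotient.eq, Ideal.Quotient.mk_algebraMap, hc]
  refine ⟨c, fun v => ?_⟩
  have hv := Module.mem_annihilator.1 (hann hrc) v
  rwa [sub_smul, sub_eq_zero, algebraMap_smul] at hv

end CentralAction

/-- Let `K` be an algebraically closed field, `A` an associative unital
`K`-algebra, and `Z ⊆ A` a subalgebra contained in the centre of `A` such that `Z` is a
finitely generated commutative `K`-algebra and `A` is generated as a `Z`-module by `n`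
elements.  Then every simple (irreducible) `A`-module is finite-dimensional over `K`,
of dimension at most `n`. -/
theorem stmt_1 (K : Type*) [Field K] [IsAlgClosed K]
    (A : Type*) [Ring A] [Algebra K A]
    (Z : Subalgebra K A)
    (hcentral : (Z : Set A) ⊆ Set.center A)
    (hfg : Z.FG)
    (n : ℕ) (a : Fin n → A)
    (hgen : Submodule.span Z (Set.range a) = ⊤)
    (M : Type*) [AddCommGroup M] [Module K M] [Module A M] [IsScalarTower K A M]
    [IsSimpleModule A M] :
    FiniteDimensional K M ∧ Module.finrank K M ≤ n := by
  let : CommRing Z :=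
    { (inferInstance : Ring Z) with
      mul_comm := fun x y => Subtype.ext ((hcentral x.2).comm y) }
  have : SMulCommClass Z A M := ⟨fun z x v => by
    rw [Subalgebra.smul_def, Subalgebra.smul_def, ← mul_smul, ← mul_smul, (hcentral z.2).comm x]⟩
  have : Algebra.FiniteType K Z := (Subalgebra.fg_iff_finiteType Z).1 hfg
  have : Module.Finite Z A := ⟨fg_def.2 ⟨_, Set.finite_range a, hgen⟩⟩
  have : Nontrivial M := IsSimpleModule.nontrivial A M
  obtain ⟨v, hv⟩ := exists_ne (0 : M)
  have hspan : span K (Set.range fun i => a i • v) = ⊤ := by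
    refine eq_top_iff.2 fun w _ => span_subset_span_of_forall_exists_smul_eq K
      (IsSimpleModule.exists_smul_eq_smul_of_isAlgClosed A (R := Z) K) _ ?_
    rw [span_range_smul_eq_top hgen (IsSimpleModule.span_singleton_eq_top A hv)]
    exact mem_top
  refine ⟨⟨fg_def.2 ⟨_, Set.finite_range _, hspan⟩⟩, ?_⟩
  rw [← finrank_top, ← hspan]
  exact (finrank_range_le_card (R := K) fun i => a i • v).trans_eq (Fintype.card_fin n)
end

section
/- Let K be a field of characteristic p > 0 and H a commutative Hopf algebra over K with augmentation ideal I = ker ε. Let k ≥ 1 and let δ : H → K be a K-linear functional with δ(1) = 0 and δ(I^{k+1}) = 0 (i.e. δ ∈ Di_k^+(H)). Then the p-th power of δ under the convolution product satisfies δ^p(I^{pk}) = 0 and δ^p(1) = 0; that is, δ^p ∈ Di_{pk−1}^+(H). -/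
open TensorProduct

section Dist

variable (K : Type*) [Field K] (H : Type*) [CommRing H] [HopfAlgebra K H]

/-- The convolution product `μρ = (μ ⊗ ρ) ∘ Δ` of two linear functionals on `H`. -/
noncomputable def conv (μ ρ : Module.Dual K H) : Module.Dual K H :=
  (LinearMap.mul' K K) ∘ₗ (TensorProduct.map μ ρ) ∘ₗ (Coalgebra.comul (R := K) (A := H))

/-- The `n`-fold convolution power of a linear functional on `H`
(with unit the counit `ε`). -/
noncomputable def convPow (δ : Module.Dual K H) : ℕ → Module.Dual K H
  | 0 => Coalgebra.counit
  | n + 1 => conv K H (convPow δ n) δ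

/-- The augmentation ideal `I = ker ε` of `H`. -/
noncomputable def augIdeal : Ideal H :=
  RingHom.ker ((Bialgebra.counitAlgHom K H : H →ₐ[K] K) : H →+* K)

end Dist

/-!
Let `J = I ⊗ H + H ⊗ I`, an ideal of `H ⊗ H`. For `x ∈ I` we have `Δx ≡ 1 ⊗ x + x ⊗ 1 mod J²`,
hence `Δ(x₁⋯xₙ) ≡ ∑_B x_{Bᶜ} ⊗ x_B mod J^(n+1)` for `xᵢ ∈ I`, while `μ ⊗ ν` kills `J^(a+b+1)`
for `μ ∈ Di_a`, `ν ∈ Di_b`. So on products of at least `a + b` elements of `I`, convolution is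
the subset convolution of the values `μ(x_B)`, i.e. multiplication of the polynomials
`P_μ = ∑_B μ(x_B) X^B` read off at squarefree monomials. Thus `δ^p(x₁⋯x_{pk})` is the coefficient
of `X₁⋯X_{pk}` in `P_δ^p`, which vanishes because in characteristic `p` all exponents of `P_δ^p`
are divisible by `p`.
-/

open Algebra.TensorProduct MvPolynomial

theorem Ideal.sup_pow_add_add_one_le {R : Type*} [CommSemiring R] (I J : Ideal R) (n m : ℕ) :
    (I ⊔ J) ^ (n + m + 1) ≤ I ^ (n + 1) ⊔ J ^ (m + 1) := by
  rw [← Ideal.add_eq_sup, ← Ideal.add_eq_sup, add_pow, Ideal.sum_eq_sup]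
  refine Finset.sup_le fun i hi => ?_
  by_cases hn : n + 1 ≤ i
  · exact Ideal.mul_le_left.trans (Ideal.mul_le_left.trans
      ((Ideal.pow_le_pow_right hn).trans le_sup_left))
  · refine Ideal.mul_le_left.trans (Ideal.mul_le_right.trans
      ((Ideal.pow_le_pow_right ?_).trans le_sup_right))
    simp only [Finset.mem_range] at hi
    lia

theorem Ideal.prod_sub_prod_mem_pow {R ι : Type*} [CommRing R] {J : Ideal R} {s : Finset ι}
    {f g : ι → R} (hg : ∀ i ∈ s, g i ∈ J) (hfg : ∀ i ∈ s, f i - g i ∈ J ^ 2) :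
    ∏ i ∈ s, f i - ∏ i ∈ s, g i ∈ J ^ (s.card + 1) := by
  classical
  induction s using Finset.induction_on with
  | empty => simp
  | insert a s ha ih =>
    have hf : ∀ i ∈ insert a s, f i ∈ J := fun i hi => by
      simpa using add_mem (Ideal.pow_le_self two_ne_zero (hfg i hi)) (hg i hi)
    have hF : ∏ i ∈ s, f i ∈ J ^ s.card := by
      simpa using Ideal.prod_mem_prod fun i hi => hf i (Finset.mem_insert_of_mem hi)
    rw [Finset.prod_insert ha, Finset.prod_insert ha, Finset.card_insert_of_notMem ha,
      show f a * ∏ i ∈ s, f i - g a * ∏ i ∈ s, g i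
        = (f a - g a) * ∏ i ∈ s, f i + g a * (∏ i ∈ s, f i - ∏ i ∈ s, g i) by ring]
    refine add_mem ?_ ?_
    · rw [show s.card + 1 + 1 = 2 + s.card by ring, pow_add]
      exact Ideal.mul_mem_mul (hfg a (Finset.mem_insert_self a s)) hF
    · rw [pow_succ']
      exact Ideal.mul_mem_mul (hg a (Finset.mem_insert_self a s))
        (ih (fun i hi => hg i (Finset.mem_insert_of_mem hi))
          (fun i hi => hfg i (Finset.mem_insert_of_mem hi)))

theorem Ideal.linearMap_eq_zero_of_mem_pow {R A M : Type*} [CommSemiring R] [CommSemiring A]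
    [Algebra R A] [AddCommMonoid M] [Module R M] {I : Ideal A} {n : ℕ} (hn : n ≠ 0)
    (φ : A →ₗ[R] M) (h : ∀ x : Fin n → A, (∀ i, x i ∈ I) → φ (∏ i, x i) = 0)
    {a : A} (ha : a ∈ I ^ n) : φ a = 0 := by
  have ha' : a ∈ (I.restrictScalars R) ^ n := by
    rw [← Submodule.restrictScalars_pow hn]; exact ha
  rw [Submodule.pow_eq_span_pow_set] at ha'
  refine (Submodule.span_le (p := LinearMap.ker φ)).2 (fun z hz => ?_) ha'
  obtain ⟨x, rfl⟩ := Set.mem_pow.1 hz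
  rw [SetLike.mem_coe, LinearMap.mem_ker, List.prod_ofFn]
  exact h _ fun i => (x i).2

theorem MvPolynomial.coeff_pow_expChar_eq_zero {R σ : Type*} [CommSemiring R] {p : ℕ}
    [ExpChar R p] (Q : MvPolynomial σ R) {n : σ →₀ ℕ} {i : σ} (h : ¬ p ∣ n i) :
    coeff n (Q ^ p) = 0 := by
  classical
  rw [Q.as_sum, sum_pow_char, coeff_sum]
  refine Finset.sum_eq_zero fun u _ => ?_
  rw [monomial_pow, coeff_monomial, if_neg]
  rintro rfl
  exact h (by simp)

namespace Finset

variable {ι : Type*}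

noncomputable def sqfreeExp (B : Finset ι) : ι →₀ ℕ := ∑ i ∈ B, Finsupp.single i 1

variable [DecidableEq ι]

lemma sqfreeExp_apply (B : Finset ι) (i : ι) : B.sqfreeExp i = if i ∈ B then 1 else 0 := by
  simp [sqfreeExp, Finsupp.finsetSum_apply, Finsupp.single_apply]

lemma sqfreeExp_le_iff {B S : Finset ι} : B.sqfreeExp ≤ S.sqfreeExp ↔ B ⊆ S := by
  refine ⟨fun h i hi => ?_, fun h i => ?_⟩
  · have := h i
    simp only [sqfreeExp_apply, hi, if_true] at this
    by_contra hS
    simp [hS] at this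
  · by_cases hi : i ∈ B
    · simp [sqfreeExp_apply, hi, h hi]
    · simp [sqfreeExp_apply, hi]

lemma sqfreeExp_sdiff {B S : Finset ι} (h : B ⊆ S) :
    (S \ B).sqfreeExp = S.sqfreeExp - B.sqfreeExp := by
  ext i
  by_cases hB : i ∈ B
  · simp [sqfreeExp_apply, hB, h hB]
  · by_cases hS : i ∈ S <;> simp [sqfreeExp_apply, hB, hS]

lemma sqfreeExp_eq_zero_iff {S : Finset ι} : S.sqfreeExp = 0 ↔ S = ∅ := by
  refine ⟨fun h => eq_empty_of_forall_notMem fun i hi => ?_, fun h => by simp [h, sqfreeExp]⟩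
  simpa [sqfreeExp_apply, hi] using DFunLike.congr_fun h i

end Finset

namespace HopfAlgebra

variable {K : Type*} [Field K] {H : Type*} [CommRing H] [HopfAlgebra K H]

variable (K H) in
/-- The ideal `I ⊗ H + H ⊗ I = ker (ε ⊗ ε)`; its `n`-th power is `∑_{a + b = n} I^a ⊗ I^b`. -/
noncomputable def augIdealTensor : Ideal (H ⊗[K] H) :=
  (augIdeal K H).map (includeLeft : H →ₐ[K] H ⊗[K] H) ⊔ (augIdeal K H).map includeRight

variable (K H) in
/-- `Di_k(H)`. -/
noncomputable def distributions (k : ℕ) : Submodule K (Module.Dual K H) :=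
  ((augIdeal K H ^ (k + 1)).restrictScalars K).dualAnnihilator

lemma mem_distributions {k : ℕ} {μ : Module.Dual K H} :
    μ ∈ distributions K H k ↔ ∀ f ∈ augIdeal K H ^ (k + 1), μ f = 0 :=
  Submodule.mem_dualAnnihilator _

lemma sub_algebraMap_counit_mem_augIdeal (a : H) :
    a - algebraMap K H (Coalgebra.counit a) ∈ augIdeal K H := by
  change Coalgebra.counit (R := K) _ = 0
  simp [Algebra.algebraMap_eq_smul_one]

lemma tmul_mem_augIdealTensor_sq {a b : H} (ha : a ∈ augIdeal K H) (hb : b ∈ augIdeal K H) :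
    a ⊗ₜ[K] b ∈ augIdealTensor K H ^ 2 := by
  rw [pow_two, ← one_mul b, ← mul_one a, ← tmul_mul_tmul]
  exact Ideal.mul_mem_mul (Ideal.mem_sup_left (Ideal.mem_map_of_mem includeLeft ha))
    (Ideal.mem_sup_right (Ideal.mem_map_of_mem includeRight hb))

lemma one_tmul_add_tmul_one_mem_augIdealTensor {x : H} (hx : x ∈ augIdeal K H) :
    1 ⊗ₜ[K] x + x ⊗ₜ[K] 1 ∈ augIdealTensor K H :=
  add_mem (Ideal.mem_sup_right (Ideal.mem_map_of_mem includeRight hx))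
    (Ideal.mem_sup_left (Ideal.mem_map_of_mem includeLeft hx))

lemma comul_sub_mem_augIdealTensor_sq {x : H} (hx : x ∈ augIdeal K H) :
    Coalgebra.comul x - (1 ⊗ₜ[K] x + x ⊗ₜ[K] 1) ∈ augIdealTensor K H ^ 2 := by
  -- `π` projects onto `I`, and `(π ⊗ π) (Δx) = Δx - 1 ⊗ x - x ⊗ 1` by the counit axioms.
  set π : H →ₗ[K] H := LinearMap.id - Algebra.linearMap K H ∘ₗ Coalgebra.counit
  have hπ : ∀ z, TensorProduct.map π π z ∈ augIdealTensor K H ^ 2 := by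
    intro z
    induction z with
    | zero => simp
    | tmul a b =>
      exact tmul_mem_augIdealTensor_sq (sub_algebraMap_counit_mem_augIdeal a)
        (sub_algebraMap_counit_mem_augIdeal b)
    | add z w hz hw => rw [map_add]; exact add_mem hz hw
  have hl : (Algebra.linearMap K H ∘ₗ Coalgebra.counit).lTensor H (Coalgebra.comul x)
      = x ⊗ₜ[K] 1 := by
    rw [LinearMap.lTensor_comp_apply, Coalgebra.lTensor_counit_comul]; simp
  have hr : (Algebra.linearMap K H ∘ₗ Coalgebra.counit).rTensor H (Coalgebra.comul x)
      = 1 ⊗ₜ[K] x := by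
    rw [LinearMap.rTensor_comp_apply, Coalgebra.rTensor_counit_comul]; simp
  have hx' : Coalgebra.counit (R := K) x = 0 := hx
  convert hπ (Coalgebra.comul x) using 1
  rw [← LinearMap.rTensor_comp_lTensor, LinearMap.comp_apply]
  simp only [π, LinearMap.lTensor_sub, LinearMap.rTensor_sub, LinearMap.sub_apply,
    LinearMap.lTensor_id, LinearMap.rTensor_id, LinearMap.id_apply, hl, hr, map_sub,
    LinearMap.rTensor_tmul, LinearMap.comp_apply, hx', map_zero, TensorProduct.zero_tmul]
  abel

lemma comul_mem_augIdealTensor {x : H} (hx : x ∈ augIdeal K H) :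
    Coalgebra.comul x ∈ augIdealTensor K H := by
  simpa using add_mem (Ideal.pow_le_self two_ne_zero (comul_sub_mem_augIdealTensor_sq hx))
    (one_tmul_add_tmul_one_mem_augIdealTensor hx)

lemma comul_mem_augIdealTensor_pow {n : ℕ} {x : H} (hx : x ∈ augIdeal K H ^ n) :
    Coalgebra.comul x ∈ augIdealTensor K H ^ n := by
  have hI : (augIdeal K H).map (Bialgebra.comulAlgHom K H) ≤ augIdealTensor K H :=
    Ideal.map_le_iff_le_comap.2 fun y hy => comul_mem_augIdealTensor hy
  exact Ideal.pow_right_mono hI n (Ideal.map_pow (Bialgebra.comulAlgHom K H) _ _ ▸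
    Ideal.mem_map_of_mem (Bialgebra.comulAlgHom K H) hx)

lemma mul'_map_eq_zero_of_mem_map_includeLeft {L : Ideal H} {μ : Module.Dual K H}
    (hμ : ∀ f ∈ L, μ f = 0) (ν : Module.Dual K H) {z : H ⊗[K] H}
    (hz : z ∈ L.map (includeLeft : H →ₐ[K] H ⊗[K] H)) :
    LinearMap.mul' K K (TensorProduct.map μ ν z) = 0 := by
  obtain ⟨w, rfl⟩ : z ∈ LinearMap.range (LinearMap.rTensor H (L.restrictScalars K).subtype) := by
    rw [← Ideal.map_includeLeft_eq]; exact hz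
  have hμL : μ ∘ₗ (L.restrictScalars K).subtype = 0 := LinearMap.ext fun f => hμ f f.2
  rw [LinearMap.map_rTensor, hμL, TensorProduct.map_zero_left, LinearMap.zero_apply, map_zero]

lemma mul'_map_eq_zero_of_mem_map_includeRight {L : Ideal H} (μ : Module.Dual K H)
    {ν : Module.Dual K H} (hν : ∀ f ∈ L, ν f = 0) {z : H ⊗[K] H}
    (hz : z ∈ L.map (includeRight : H →ₐ[K] H ⊗[K] H)) :
    LinearMap.mul' K K (TensorProduct.map μ ν z) = 0 := by
  obtain ⟨w, rfl⟩ : z ∈ LinearMap.range (LinearMap.lTensor H (L.restrictScalars K).subtype) := by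
    rw [← Ideal.map_includeRight_eq]; exact hz
  have hνL : ν ∘ₗ (L.restrictScalars K).subtype = 0 := LinearMap.ext fun f => hν f f.2
  rw [LinearMap.map_lTensor, hνL, TensorProduct.map_zero_right, LinearMap.zero_apply, map_zero]

lemma mul'_map_eq_zero_of_mem_augIdealTensor_pow {a b : ℕ} {μ ν : Module.Dual K H}
    (hμ : μ ∈ distributions K H a) (hν : ν ∈ distributions K H b) {z : H ⊗[K] H}
    (hz : z ∈ augIdealTensor K H ^ (a + b + 1)) :
    LinearMap.mul' K K (TensorProduct.map μ ν z) = 0 := by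
  have hz' := Ideal.sup_pow_add_add_one_le _ _ a b hz
  rw [← Ideal.map_pow, ← Ideal.map_pow] at hz'
  obtain ⟨z₁, hz₁, z₂, hz₂, rfl⟩ := Submodule.mem_sup.1 hz'
  rw [map_add, map_add, mul'_map_eq_zero_of_mem_map_includeLeft (mem_distributions.1 hμ) ν hz₁,
    mul'_map_eq_zero_of_mem_map_includeRight μ (mem_distributions.1 hν) hz₂, add_zero]

lemma conv_mem_distributions {a b : ℕ} {μ ν : Module.Dual K H}
    (hμ : μ ∈ distributions K H a) (hν : ν ∈ distributions K H b) :
    conv K H μ ν ∈ distributions K H (a + b) :=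
  mem_distributions.2 fun _ hf =>
    mul'_map_eq_zero_of_mem_augIdealTensor_pow hμ hν (comul_mem_augIdealTensor_pow hf)

lemma counit_mem_distributions_zero : Coalgebra.counit ∈ distributions K H 0 :=
  mem_distributions.2 fun f hf => by rwa [zero_add, pow_one] at hf

lemma convPow_mem_distributions {k : ℕ} {δ : Module.Dual K H} (hδ : δ ∈ distributions K H k)
    (m : ℕ) : convPow K H δ m ∈ distributions K H (m * k) := by
  induction m with
  | zero => rw [zero_mul]; exact counit_mem_distributions_zero
  | succ m ih => rw [add_one_mul]; exact conv_mem_distributions ih hδ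

lemma conv_apply_one (μ ν : Module.Dual K H) : conv K H μ ν 1 = μ 1 * ν 1 := by
  simp [conv, Algebra.TensorProduct.one_def]

variable {ι : Type*}

lemma prod_mem_augIdeal_pow {x : ι → H} (hx : ∀ i, x i ∈ augIdeal K H) (S : Finset ι) :
    ∏ i ∈ S, x i ∈ augIdeal K H ^ S.card := by
  simpa using Ideal.prod_mem_prod fun i (_ : i ∈ S) => hx i

variable [DecidableEq ι]

lemma comul_prod_sub_sum_mem_augIdealTensor_pow {x : ι → H} {s : Finset ι}
    (hx : ∀ i ∈ s, x i ∈ augIdeal K H) :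
    Coalgebra.comul (∏ i ∈ s, x i)
      - ∑ B ∈ s.powerset, (∏ i ∈ s \ B, x i) ⊗ₜ[K] (∏ i ∈ B, x i)
      ∈ augIdealTensor K H ^ (s.card + 1) := by
  have hprod : ∑ B ∈ s.powerset, (∏ i ∈ s \ B, x i) ⊗ₜ[K] (∏ i ∈ B, x i)
      = ∏ i ∈ s, ((1 : H) ⊗ₜ[K] x i + x i ⊗ₜ[K] 1) := by
    rw [Finset.prod_add]
    refine Finset.sum_congr rfl fun B _ => ?_
    have hR := map_prod (includeRight : H →ₐ[K] H ⊗[K] H) x B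
    have hL := map_prod (includeLeft : H →ₐ[K] H ⊗[K] H) x (s \ B)
    simp only [includeLeft_apply, includeRight_apply] at hL hR
    rw [← hL, ← hR, tmul_mul_tmul, one_mul, mul_one]
  rw [hprod, ← Bialgebra.comulAlgHom_apply, map_prod]
  exact Ideal.prod_sub_prod_mem_pow (fun i hi => one_tmul_add_tmul_one_mem_augIdealTensor (hx i hi))
    (fun i hi => comul_sub_mem_augIdealTensor_sq (hx i hi))

lemma conv_prod_eq_sum {a b : ℕ} {μ ν : Module.Dual K H}
    (hμ : μ ∈ distributions K H a) (hν : ν ∈ distributions K H b)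
    {x : ι → H} {s : Finset ι} (hx : ∀ i ∈ s, x i ∈ augIdeal K H) (hs : a + b ≤ s.card) :
    conv K H μ ν (∏ i ∈ s, x i) = ∑ B ∈ s.powerset, μ (∏ i ∈ s \ B, x i) * ν (∏ i ∈ B, x i) := by
  have herr := mul'_map_eq_zero_of_mem_augIdealTensor_pow hμ hν
    (Ideal.pow_le_pow_right (by lia) (comul_prod_sub_sum_mem_augIdealTensor_pow hx))
  rw [map_sub, map_sub, sub_eq_zero] at herr
  simp [conv, herr]

variable [Fintype ι]

variable (K) in
noncomputable def genPoly (μ : Module.Dual K H) (x : ι → H) : MvPolynomial ι K :=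
  ∑ B : Finset ι, monomial B.sqfreeExp (μ (∏ i ∈ B, x i))

lemma coeff_mul_genPoly (Q : MvPolynomial ι K) (μ : Module.Dual K H) (x : ι → H)
    (S : Finset ι) :
    coeff S.sqfreeExp (Q * genPoly K μ x)
      = ∑ B ∈ S.powerset, coeff (S \ B).sqfreeExp Q * μ (∏ i ∈ B, x i) := by
  simp only [genPoly, Finset.mul_sum, coeff_sum, coeff_mul_monomial', Finset.sqfreeExp_le_iff]
  rw [← Finset.sum_filter, Finset.filter_subset_univ]
  exact Finset.sum_congr rfl fun B hB => by
    rw [Finset.sqfreeExp_sdiff (Finset.mem_powerset.1 hB)]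

lemma coeff_genPoly_pow {k : ℕ} {δ : Module.Dual K H} (hδ : δ ∈ distributions K H k)
    {x : ι → H} (hx : ∀ i, x i ∈ augIdeal K H) (m : ℕ) {S : Finset ι} (hS : m * k ≤ S.card) :
    coeff S.sqfreeExp (genPoly K δ x ^ m) = convPow K H δ m (∏ i ∈ S, x i) := by
  induction m generalizing S with
  | zero =>
    rw [pow_zero, coeff_one, convPow]
    rcases S.eq_empty_or_nonempty with rfl | hne
    · simp [Finset.sqfreeExp]
    · have hI : ∏ i ∈ S, x i ∈ augIdeal K H :=
        Ideal.pow_le_self hne.card_ne_zero (prod_mem_augIdeal_pow hx S)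
      rw [if_neg (Ne.symm (Finset.sqfreeExp_eq_zero_iff.not.2 hne.ne_empty))]
      exact (RingHom.mem_ker.1 hI).symm
  | succ m ih =>
    rw [pow_succ, coeff_mul_genPoly, convPow,
      conv_prod_eq_sum (convPow_mem_distributions hδ m) hδ (fun i _ => hx i) (by lia)]
    refine Finset.sum_congr rfl fun B hB => ?_
    by_cases hBk : k + 1 ≤ B.card
    · rw [mem_distributions.1 hδ _ (Ideal.pow_le_pow_right hBk (prod_mem_augIdeal_pow hx B)),
        mul_zero, mul_zero]
    · rw [ih (by rw [Finset.card_sdiff_of_subset (Finset.mem_powerset.1 hB)]; lia)]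

lemma convPow_prod_eq_zero {p : ℕ} (hp : p.Prime) [CharP K p] [Nonempty ι] {k : ℕ}
    {δ : Module.Dual K H} (hδ : δ ∈ distributions K H k) {x : ι → H}
    (hx : ∀ i, x i ∈ augIdeal K H) (hcard : p * k ≤ Fintype.card ι) :
    convPow K H δ p (∏ i, x i) = 0 := by
  have := Fact.mk hp
  obtain ⟨i⟩ := ‹Nonempty ι›
  rw [← coeff_genPoly_pow hδ hx p hcard]
  refine coeff_pow_expChar_eq_zero _ (i := i) ?_
  simpa [Finset.sqfreeExp_apply] using hp.one_lt.ne'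

end HopfAlgebra

open HopfAlgebra

/-- Let `K` be a field of characteristic `p > 0` and `H` a commutative
Hopf algebra over `K` with augmentation ideal `I = ker ε`.  Let `k ≥ 1` and let
`δ : H → K` be a `K`-linear functional with `δ(1) = 0` and `δ(I^{k+1}) = 0`
(i.e. `δ ∈ Di_k^+(H)`).  Then the `p`-th power of `δ` under the convolution product
satisfies `δ^p(I^{pk}) = 0` and `δ^p(1) = 0`; that is, `δ^p ∈ Di_{pk−1}^+(H)`. -/
theorem stmt_5 (K : Type*) [Field K] (p : ℕ) (hp : p.Prime) [CharP K p]
    (H : Type*) [CommRing H] [HopfAlgebra K H]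
    (k : ℕ) (hk : 1 ≤ k)
    (δ : Module.Dual K H)
    (hδ1 : δ 1 = 0)
    (hδI : ∀ f ∈ (augIdeal K H) ^ (k + 1), δ f = 0) :
    (∀ f ∈ (augIdeal K H) ^ (p * k), convPow K H δ p f = 0) ∧ convPow K H δ p 1 = 0 := by
  have hpk : p * k ≠ 0 := Nat.mul_ne_zero hp.ne_zero (by lia)
  refine ⟨fun f hf => Ideal.linearMap_eq_zero_of_mem_pow hpk _ (fun x hx => ?_) hf, ?_⟩
  · have : Nonempty (Fin (p * k)) := ⟨⟨0, Nat.pos_of_ne_zero hpk⟩⟩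
    exact convPow_prod_eq_zero hp (mem_distributions.2 hδI) hx (by simp)
  · obtain ⟨q, rfl⟩ := Nat.exists_eq_add_one.2 hp.pos
    rw [convPow, conv_apply_one, hδ1, mul_zero]
end
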